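/- arXiv:1511.03700 — 7 statements merged into one kernel-verified Lean document; each statement's English description precedes it below -/
import Mathlib

section
/- The volume (Lebesgue measure) of the trace nonnegative polytope T^n = { x ∈ ℝ^n : ‖x‖_∞ ≤ 1 and 1 + ∑_{i=1}^n x_i ≥ 0 } equals 2^n · (1 - (1/n!) · ∑_{k=0}^{⌊(n-1)/2⌋} (-1)^k · C(n,k) · ((n-1)/2 - k)^n ). -/
/-!
The substitution `x = 2y - 1` maps `[0,1]ⁿ` onto `[-1,1]ⁿ` and scales volume by `2ⁿ`; `T^n` is
`[-1,1]ⁿ` minus the image of `{y ∈ [0,1]ⁿ : ∑ yᵢ < (n-1)/2}`, whose volume is the Irwin–Hall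
distribution function `Fₙ` at `(n-1)/2`. Slicing off one coordinate gives
`Fₙ₊₁(t) = ∫₀¹ Fₙ(t - y) dy`; averaging over a unit translate commutes with finite differences and
turns `u₊ⁿ` into `∇u₊ⁿ⁺¹/(n+1)`, so by induction `Fₙ = ∇ⁿu₊ⁿ/n!`. Expanding the `n`-th difference
gives the alternating binomial sum, and at `t = (n-1)/2` exactly the terms with `k ≤ ⌊(n-1)/2⌋`
have `t - k ≥ 0`.
-/

open MeasureTheory Finset fwdDiff
open scoped Nat Pointwise

lemma hasDerivWithinAt_Ioi_max_zero_pow {n : ℕ} (hn : n ≠ 0) (x : ℝ) :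
    HasDerivWithinAt (fun u : ℝ => max u 0 ^ (n + 1)) ((n + 1) * max x 0 ^ n) (Set.Ioi x) x := by
  rcases lt_or_ge x 0 with hx | hx
  · have hzero : (fun u : ℝ => max u 0 ^ (n + 1)) =ᶠ[nhds x] fun _ => 0 := by
      filter_upwards [Iio_mem_nhds hx] with u (hu : u < 0)
      simp [max_eq_right hu.le]
    rw [max_eq_right hx.le, zero_pow hn, mul_zero]
    exact ((hasDerivAt_const x (0 : ℝ)).congr_of_eventuallyEq hzero).hasDerivWithinAt
  · have := (hasDerivAt_pow (n + 1) x).hasDerivWithinAt (s := Set.Ioi x)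
    refine this.congr (fun u hu => ?_) ?_ |>.congr_deriv ?_
    · simp [max_eq_left (hx.trans hu.le)]
    · simp [max_eq_left hx]
    · simp [max_eq_left hx]

lemma integral_max_zero_pow {n : ℕ} (hn : n ≠ 0) (a b : ℝ) :
    ∫ u in a..b, max u 0 ^ n = (max b 0 ^ (n + 1) - max a 0 ^ (n + 1)) / (n + 1) := by
  have hcont (m : ℕ) : Continuous fun u : ℝ => max u 0 ^ m := by fun_prop
  rw [eq_div_iff (by positivity), ← intervalIntegral.integral_mul_const]
  refine intervalIntegral.integral_eq_sub_of_hasDeriv_right (hcont (n + 1)).continuousOn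
    (fun x _ => ?_) (((hcont n).mul continuous_const).intervalIntegrable a b)
  simpa [mul_comm] using hasDerivWithinAt_Ioi_max_zero_pow hn x

lemma integral_fwdDiff_iter_comp_sub {f : ℝ → ℝ} (hf : Continuous f) (h a b t : ℝ) (n : ℕ) :
    ∫ y in a..b, Δ_[h] ^[n] f (t - y) = Δ_[h] ^[n] (fun s => ∫ y in a..b, f (s - y)) t := by
  simp only [fwdDiff_iter_eq_sum_shift, zsmul_eq_mul]
  rw [intervalIntegral.integral_finsetSum fun k _ =>
    (by fun_prop : Continuous _).intervalIntegrable a b]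
  refine sum_congr rfl fun k _ => ?_
  rw [intervalIntegral.integral_const_mul]
  simp only [sub_add_eq_add_sub]

/-- `∇ⁿ(u₊ⁿ)/n!` for the backward difference `∇ = -Δ_[-1]`, i.e. the distribution function of a
sum of `n` independent uniform variables on `[0, 1]`. -/
noncomputable def irwinHallCDF (n : ℕ) (t : ℝ) : ℝ :=
  (-1) ^ n / n ! * Δ_[-1] ^[n] (fun u : ℝ => max u 0 ^ n) t

lemma integral_irwinHallCDF_comp_sub {n : ℕ} (hn : n ≠ 0) (t : ℝ) :
    ∫ y in (0 : ℝ)..1, irwinHallCDF n (t - y) = irwinHallCDF (n + 1) t := by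
  have hstep : (fun s => ∫ y in (0 : ℝ)..1, max (s - y) 0 ^ n)
      = (-((n : ℝ) + 1)⁻¹) • Δ_[-1] (fun u : ℝ => max u 0 ^ (n + 1)) := by
    funext s
    rw [intervalIntegral.integral_comp_sub_left (fun u => max u 0 ^ n), integral_max_zero_pow hn]
    simp only [fwdDiff, Pi.smul_apply, smul_eq_mul, sub_zero, ← sub_eq_add_neg]
    ring
  simp only [irwinHallCDF]
  rw [intervalIntegral.integral_const_mul, integral_fwdDiff_iter_comp_sub (by fun_prop), hstep,
    fwdDiff_iter_const_smul, Pi.smul_apply, ← Function.iterate_succ_apply, Nat.factorial_succ]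
  generalize Δ_[-1] ^[n + 1] (fun u : ℝ => max u 0 ^ (n + 1)) t = D
  rw [smul_eq_mul, pow_succ]
  push_cast
  field_simp

lemma continuous_irwinHallCDF (n : ℕ) : Continuous (irwinHallCDF n) := by
  unfold irwinHallCDF
  simp only [fwdDiff_iter_eq_sum_shift]
  fun_prop

lemma irwinHallCDF_one (t : ℝ) : irwinHallCDF 1 t = max t 0 - max (t - 1) 0 := by
  simp [irwinHallCDF, fwdDiff, ← sub_eq_add_neg]

lemma irwinHallCDF_nonneg {n : ℕ} (hn : n ≠ 0) (t : ℝ) : 0 ≤ irwinHallCDF n t := by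
  induction n, Nat.one_le_iff_ne_zero.mpr hn using Nat.le_induction generalizing t with
  | base => rw [irwinHallCDF_one, sub_nonneg]; exact max_le_max (by linarith) le_rfl
  | succ n hn ih =>
    rw [← integral_irwinHallCDF_comp_sub (by omega)]
    exact intervalIntegral.integral_nonneg zero_le_one fun y _ => ih (by omega) (t - y)

lemma irwinHallCDF_eq_sum_of_mem_Ico {n m : ℕ} (hm : m ≤ n) {t : ℝ}
    (ht : t ∈ Set.Ico (m : ℝ) (m + 1)) :
    irwinHallCDF n t
      = (n ! : ℝ)⁻¹ * ∑ k ∈ range (m + 1), (-1) ^ k * (n.choose k : ℝ) * (t - k) ^ n := by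
  unfold irwinHallCDF
  rw [fwdDiff_iter_eq_sum_shift, mul_sum, mul_sum,
    ← sum_subset (range_subset_range.mpr (by omega : m + 1 ≤ n + 1))]
  · refine sum_congr rfl fun k hk => ?_
    have hkm : k ≤ m := Nat.lt_succ_iff.mp (mem_range.mp hk)
    have hkt : (k : ℝ) ≤ t := le_trans (by exact_mod_cast hkm) ht.1
    have hsign : (-1 : ℝ) ^ n * (-1) ^ (n - k) = (-1) ^ k := by
      rw [← pow_add, show n + (n - k) = k + 2 * (n - k) by omega, pow_add, pow_mul]
      norm_num
    rw [zsmul_eq_mul, nsmul_eq_mul, mul_neg_one, ← sub_eq_add_neg, max_eq_left (by linarith),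
      ← hsign]
    push_cast
    ring
  · intro k hkn hkm
    rw [mem_range] at hkn hkm
    have hkt : t < k := ht.2.trans_le (by exact_mod_cast Nat.not_lt.mp hkm)
    rw [nsmul_eq_mul, mul_neg_one, ← sub_eq_add_neg, max_eq_right (by linarith),
      zero_pow (by omega), smul_zero, mul_zero]

lemma volume_eq_lintegral_volume_cons {n : ℕ} {S : Set (Fin (n + 1) → ℝ)} (hS : MeasurableSet S) :
    volume S = ∫⁻ a, volume {z : Fin n → ℝ | Fin.cons a z ∈ S} := by
  have he := (volume_preserving_piFinSuccAbove (fun _ : Fin (n + 1) => ℝ) 0).symm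
  rw [← he.measure_preimage hS.nullMeasurableSet, Measure.volume_eq_prod,
    Measure.prod_apply (hS.preimage he.measurable)]
  simp only [MeasurableEquiv.piFinSuccAbove_symm_apply, Fin.insertNthEquiv_zero]
  rfl

def unitCubeSumLt (n : ℕ) (t : ℝ) : Set (Fin n → ℝ) :=
  {y | (∀ i, y i ∈ Set.Icc 0 1) ∧ ∑ i, y i < t}

lemma measurableSet_unitCubeSumLt (n : ℕ) (t : ℝ) : MeasurableSet (unitCubeSumLt n t) := by
  unfold unitCubeSumLt
  measurability

lemma cons_mem_unitCubeSumLt_iff {n : ℕ} {t a : ℝ} {z : Fin n → ℝ} :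
    Fin.cons a z ∈ unitCubeSumLt (n + 1) t ↔ a ∈ Set.Icc 0 1 ∧ z ∈ unitCubeSumLt n (t - a) := by
  simp only [unitCubeSumLt, Set.mem_ofPred_eq, Fin.forall_fin_succ, Fin.cons_zero, Fin.cons_succ,
    Fin.sum_cons, lt_sub_iff_add_lt', and_assoc]

lemma volume_unitCubeSumLt_one (t : ℝ) :
    volume (unitCubeSumLt 1 t) = ENNReal.ofReal (max t 0 - max (t - 1) 0) := by
  have hS : unitCubeSumLt 1 t
      = MeasurableEquiv.funUnique (Fin 1) ℝ ⁻¹' (Set.Icc 0 1 ∩ Set.Iio t) := by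
    ext y
    simp [unitCubeSumLt]
  rw [hS]
  refine ((volume_preserving_funUnique (Fin 1) ℝ).measure_preimage
    (measurableSet_Icc.inter measurableSet_Iio).nullMeasurableSet).trans ?_
  rw [← measure_congr ((Ico_ae_eq_Icc (μ := volume) (a := (0 : ℝ)) (b := 1)).inter
      (ae_eq_refl (Set.Iio t))), Set.Ico_inter_Iio, Real.volume_Ico, sub_zero]
  have hclip : max (min 1 t) 0 = max t 0 - max (t - 1) 0 := by
    simp only [max_def, min_def]
    split_ifs <;> linarith
  rw [← hclip, ENNReal.ofReal_max, ENNReal.ofReal_zero, max_eq_left zero_le]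

lemma volume_unitCubeSumLt {n : ℕ} (hn : n ≠ 0) (t : ℝ) :
    volume (unitCubeSumLt n t) = ENNReal.ofReal (irwinHallCDF n t) := by
  induction n, Nat.one_le_iff_ne_zero.mpr hn using Nat.le_induction generalizing t with
  | base => rw [volume_unitCubeSumLt_one, irwinHallCDF_one]
  | succ n hn ih =>
    have hslice (a : ℝ) : volume {z : Fin n → ℝ | Fin.cons a z ∈ unitCubeSumLt (n + 1) t}
        = (Set.Icc 0 1).indicator (fun a => ENNReal.ofReal (irwinHallCDF n (t - a))) a := by
      by_cases ha : a ∈ Set.Icc 0 1 <;> simp [cons_mem_unitCubeSumLt_iff, ha, ← ih (by omega)]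
    rw [volume_eq_lintegral_volume_cons (measurableSet_unitCubeSumLt _ _), lintegral_congr hslice,
      lintegral_indicator measurableSet_Icc, ← ofReal_integral_eq_lintegral_ofReal,
      integral_Icc_eq_integral_Ioc, ← intervalIntegral.integral_of_le zero_le_one,
      integral_irwinHallCDF_comp_sub (by omega)]
    · exact ((continuous_irwinHallCDF n).comp (by fun_prop)).integrableOn_Icc
    · exact Filter.Eventually.of_forall fun a => irwinHallCDF_nonneg (by omega) (t - a)

lemma setOf_abs_le_one_eq_Icc (n : ℕ) :
    {x : Fin n → ℝ | ∀ i, |x i| ≤ 1} = Set.Icc (-1) 1 := by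
  ext x
  simp [abs_le, Pi.le_def, forall_and]

lemma volume_setOf_abs_le_one (n : ℕ) : volume {x : Fin n → ℝ | ∀ i, |x i| ≤ 1} = 2 ^ n := by
  rw [setOf_abs_le_one_eq_Icc, Real.volume_Icc_pi]
  norm_num

lemma setOf_abs_le_one_sum_lt_eq (n : ℕ) (s : ℝ) :
    {x : Fin n → ℝ | (∀ i, |x i| ≤ 1) ∧ ∑ i, x i < s}
      = (-1 : Fin n → ℝ) +ᵥ (2 : ℝ) • unitCubeSumLt n ((s + n) / 2) := by
  ext x
  rw [Set.mem_vadd_set_iff_neg_vadd_mem, Set.mem_smul_set_iff_inv_smul_mem₀ two_ne_zero]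
  simp only [unitCubeSumLt, Set.mem_ofPred_eq, vadd_eq_add, neg_neg, Pi.smul_apply, Pi.add_apply,
    Pi.one_apply, smul_eq_mul, Set.mem_Icc, ← mul_sum, sum_add_distrib, sum_const, card_univ,
    Fintype.card_fin, nsmul_eq_mul, mul_one]
  refine and_congr (forall_congr' fun i => ?_) ?_
  · rw [abs_le]
    constructor <;> rintro ⟨h₁, h₂⟩ <;> constructor <;> linarith
  · constructor <;> intro h <;> linarith

lemma volume_setOf_abs_le_one_sum_lt {n : ℕ} (hn : n ≠ 0) (s : ℝ) :
    volume {x : Fin n → ℝ | (∀ i, |x i| ≤ 1) ∧ ∑ i, x i < s}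
      = ENNReal.ofReal (2 ^ n * irwinHallCDF n ((s + n) / 2)) := by
  rw [setOf_abs_le_one_sum_lt_eq, measure_vadd, Measure.addHaar_smul, volume_unitCubeSumLt hn,
    Module.finrank_fin_fun, abs_of_pos (by positivity),
    ← ENNReal.ofReal_mul (by positivity)]

/-- The volume of the trace nonnegative polytope `T^n` equals
`2^n * (1 - (1/n!) * ∑_{k=0}^{⌊(n-1)/2⌋} (-1)^k C(n,k) ((n-1)/2 - k)^n)`. -/
theorem volume_trace_nonneg_polytope (n : ℕ) (hn : 1 ≤ n) :
    volume {x : Fin n → ℝ | (∀ i, |x i| ≤ 1) ∧ 0 ≤ 1 + ∑ i, x i} =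
      ENNReal.ofReal (2 ^ n * (1 - (1 / (n.factorial : ℝ)) *
        ∑ k ∈ Finset.range ((n - 1) / 2 + 1),
          (-1 : ℝ) ^ k * (n.choose k : ℝ) * (((n : ℝ) - 1) / 2 - (k : ℝ)) ^ n)) := by
  have hn₀ : n ≠ 0 := by omega
  set B := {x : Fin n → ℝ | (∀ i, |x i| ≤ 1) ∧ ∑ i, x i < -1}
  have hdiff : {x : Fin n → ℝ | (∀ i, |x i| ≤ 1) ∧ 0 ≤ 1 + ∑ i, x i}
      = {x | ∀ i, |x i| ≤ 1} \ B := by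
    ext x
    simp only [B, Set.mem_sdiff, Set.mem_ofPred_eq, not_and, not_lt]
    exact ⟨fun h => ⟨h.1, fun _ => by linarith [h.2]⟩, fun h => ⟨h.1, by linarith [h.2 h.1]⟩⟩
  have hB : MeasurableSet B := by measurability
  have hτ : ((n : ℝ) - 1) / 2 ∈ Set.Ico (((n - 1) / 2 : ℕ) : ℝ) (((n - 1) / 2 : ℕ) + 1) := by
    obtain ⟨h₁, h₂⟩ : 2 * ((n - 1) / 2) + 1 ≤ n ∧ n ≤ 2 * ((n - 1) / 2) + 2 := by omega
    have h₁' : (2 * ((n - 1) / 2 : ℕ) + 1 : ℝ) ≤ n := by exact_mod_cast h₁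
    have h₂' : (n : ℝ) ≤ 2 * ((n - 1) / 2 : ℕ) + 2 := by exact_mod_cast h₂
    constructor <;> linarith
  rw [hdiff, measure_sdiff (Set.ofPred_subset_ofPred.mpr fun _ h => h.1) hB.nullMeasurableSet
      (by rw [volume_setOf_abs_le_one_sum_lt hn₀]; exact ENNReal.ofReal_ne_top),
    volume_setOf_abs_le_one, volume_setOf_abs_le_one_sum_lt hn₀, neg_add_eq_sub,
    ← ENNReal.ofReal_ofNat, ← ENNReal.ofReal_pow zero_le_two,
    ← ENNReal.ofReal_sub _ (mul_nonneg (by positivity) (irwinHallCDF_nonneg hn₀ _)),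
    irwinHallCDF_eq_sum_of_mem_Ico (by omega) hτ, one_div]
  congr 1
  ring
end

section
/- For n ≥ 1 and real x with 0 ≤ x ≤ n, the n-dimensional Lebesgue measure of the set { y ∈ [0,1]^n : y_1 + ... + y_n ≤ x } equals (1/n!) · ∑_{k=0}^{⌊x⌋} (-1)^k · C(n,k) · (x-k)^n. -/
/-! Writing `1[0 ≤ r < 1] = 1[0 ≤ r] - 1[1 ≤ r]` in every coordinate and expanding the product
expresses the indicator of the half-open cube as an alternating sum of indicators of the orthants
`{y | y ≥ 1_s}`, `s` ranging over the sets of coordinates. Cut by `∑ y i ≤ x`, such an orthant is a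
translate of the corner simplex `{y ≥ 0, ∑ y i ≤ x - #s}`, whose volume `(x - #s)₊ ^ n / n!` follows
by slicing off one coordinate and induction on `n`. Grouping the subsets `s` by cardinality gives
the binomial coefficients; the closed cube differs from the half-open one by a null set. -/

open MeasureTheory Finset
open scoped Nat

def cornerSimplex {ι : Type*} [Fintype ι] (a : ι → ℝ) (t : ℝ) : Set (ι → ℝ) :=
  Set.Ici a ∩ {y | ∑ i, y i ≤ t}

section Fintype

variable {ι : Type*} [Fintype ι]

theorem measurableSet_cornerSimplex (a : ι → ℝ) (t : ℝ) :
    MeasurableSet (cornerSimplex a t) :=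
  measurableSet_Ici.inter (measurableSet_le (by fun_prop) measurable_const)

theorem cornerSimplex_eq_preimage_add_neg (a : ι → ℝ) (t : ℝ) :
    cornerSimplex a t = (· + -a) ⁻¹' cornerSimplex 0 (t - ∑ i, a i) := by
  ext y
  simp [cornerSimplex, ← sub_eq_add_neg]

theorem volume_cornerSimplex_eq_volume_cornerSimplex_zero (a : ι → ℝ) (t : ℝ) :
    volume (cornerSimplex a t) = volume (cornerSimplex (0 : ι → ℝ) (t - ∑ i, a i)) := by
  rw [cornerSimplex_eq_preimage_add_neg, measure_preimage_add_right]

theorem indicator_Ici_indicator_eq_prod_mul_prod [DecidableEq ι] (s : Finset ι) (y : ι → ℝ) :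
    (Set.Ici ((s : Set ι).indicator 1)).indicator (1 : (ι → ℝ) → ℝ) y =
      (∏ i ∈ univ \ s, (Set.Ici (0 : ℝ)).indicator 1 (y i)) *
        ∏ i ∈ s, (Set.Ici (1 : ℝ)).indicator 1 (y i) := by
  classical
  simp only [Set.indicator_apply, Set.mem_Ici, Pi.one_apply, prod_boole, ite_zero_mul_ite_zero,
    mem_sdiff, mem_univ, true_and, Pi.le_def, mem_coe, mul_one]
  refine if_congr ⟨fun h => ⟨fun i hi => ?_, fun i hi => ?_⟩, fun ⟨h0, h1⟩ i => ?_⟩ rfl rfl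
  · simpa [hi] using h i
  · simpa [hi] using h i
  · by_cases hi : i ∈ s <;> simp [hi, h0, h1]

theorem indicator_univ_pi_Ico_eq_sum_powerset [DecidableEq ι] (y : ι → ℝ) :
    (Set.univ.pi fun _ => Set.Ico (0 : ℝ) 1).indicator (1 : (ι → ℝ) → ℝ) y =
      ∑ s ∈ (univ : Finset ι).powerset,
        (-1) ^ #s * (Set.Ici ((s : Set ι).indicator 1)).indicator 1 y := by
  have hprod : (Set.univ.pi fun _ => Set.Ico (0 : ℝ) 1).indicator (1 : (ι → ℝ) → ℝ) y =
      ∏ i, (Set.Ico (0 : ℝ) 1).indicator 1 (y i) := by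
    classical
    simp [Set.indicator_apply, prod_boole]
  simp_rw [hprod, ← Set.Ici_sdiff_Ici, Set.indicator_sdiff (Set.Ici_subset_Ici.2 zero_le_one),
    Pi.sub_apply, prod_sub, indicator_Ici_indicator_eq_prod_mul_prod, mul_assoc]

end Fintype

theorem volume_cornerSimplex_zero_succ (n : ℕ) (t : ℝ) :
    volume (cornerSimplex (0 : Fin (n + 1) → ℝ) t) =
      ∫⁻ a in Set.Ici 0, volume (cornerSimplex (0 : Fin n → ℝ) (t - a)) := by
  set B : Set (ℝ × (Fin n → ℝ)) := {p | p.2 ∈ cornerSimplex 0 (t - p.1)}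
  have hB : MeasurableSet B :=
    (measurableSet_le measurable_const measurable_snd).inter
      (measurableSet_le (by fun_prop) (by fun_prop))
  have hpre : (MeasurableEquiv.piFinSuccAbove (fun _ => ℝ) 0).symm ⁻¹' cornerSimplex 0 t =
      B ∩ Set.Ici 0 ×ˢ Set.univ := by
    ext ⟨a, z⟩
    simp only [MeasurableEquiv.piFinSuccAbove_symm_apply, Fin.insertNthEquiv_zero, cornerSimplex,
      Fin.sum_univ_succ, Set.preimage_inter, Set.preimage_ofPred_eq, Fin.consEquiv_apply,
      Fin.cons_zero, Fin.cons_succ, Set.mem_inter_iff, Set.mem_preimage, Set.mem_Ici, Pi.le_def,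
      Pi.zero_apply, Fin.forall_fin_succ, Set.mem_ofPred_eq, le_sub_iff_add_le', Set.mem_prod,
      Set.mem_univ, and_true, B]
    tauto
  rw [← (volume_preserving_piFinSuccAbove (fun _ : Fin (n + 1) => ℝ) 0).symm.measure_preimage
      (measurableSet_cornerSimplex _ _).nullMeasurableSet, hpre, ← Measure.restrict_apply hB,
    Measure.volume_eq_prod, ← Measure.prod_restrict, Measure.restrict_univ, Measure.prod_apply hB]
  rfl

theorem integral_sub_pow_div_factorial (n : ℕ) (t : ℝ) :
    ∫ a in (0 : ℝ)..t, (t - a) ^ n / n ! = t ^ (n + 1) / (n + 1)! := by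
  rw [intervalIntegral.integral_div, intervalIntegral.integral_comp_sub_left (· ^ n), sub_self,
    sub_zero, integral_pow, Nat.factorial_succ]
  push_cast
  field_simp
  ring

theorem setLIntegral_Ici_ofReal_ite_pow (n : ℕ) (t : ℝ) :
    ∫⁻ a in Set.Ici 0, ENNReal.ofReal (if 0 ≤ t - a then (t - a) ^ n / n ! else 0) =
      ENNReal.ofReal (if 0 ≤ t then t ^ (n + 1) / (n + 1)! else 0) := by
  have hind : ∀ a, ENNReal.ofReal (if 0 ≤ t - a then (t - a) ^ n / n ! else 0) =
      (Set.Iic t).indicator (fun a => ENNReal.ofReal ((t - a) ^ n / n !)) a := by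
    intro a
    simp only [Set.indicator_apply, Set.mem_Iic, sub_nonneg]
    split_ifs <;> simp
  have hnonneg : ∀ a ∈ Set.Icc 0 t, 0 ≤ (t - a) ^ n / n ! := fun a ha => by
    have := sub_nonneg.2 ha.2
    positivity
  simp_rw [hind]
  rw [lintegral_indicator measurableSet_Iic, Measure.restrict_restrict measurableSet_Iic,
    Set.Iic_inter_Ici, ← ofReal_integral_eq_lintegral_ofReal
      (by fun_prop : Continuous fun a : ℝ => (t - a) ^ n / n !).integrableOn_Icc
      (ae_restrict_of_forall_mem measurableSet_Icc hnonneg),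
    integral_Icc_eq_integral_Ioc]
  split_ifs with ht
  · rw [← intervalIntegral.integral_of_le ht, integral_sub_pow_div_factorial]
  · rw [Set.Ioc_eq_empty (by linarith), Measure.restrict_empty, integral_zero_measure]

theorem volume_cornerSimplex_zero (n : ℕ) (t : ℝ) :
    volume (cornerSimplex (0 : Fin n → ℝ) t) =
      ENNReal.ofReal (if 0 ≤ t then t ^ n / n ! else 0) := by
  induction n generalizing t with
  | zero =>
    rw [Measure.volume_pi_eq_dirac 0, Measure.dirac_apply' _ (measurableSet_cornerSimplex _ _)]
    split_ifs with ht <;> simp [cornerSimplex, ht]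
  | succ n ih =>
    simp_rw [volume_cornerSimplex_zero_succ, ih]
    exact setLIntegral_Ici_ofReal_ite_pow n t

theorem volume_cornerSimplex {n : ℕ} (a : Fin n → ℝ) (t : ℝ) :
    volume (cornerSimplex a t) =
      ENNReal.ofReal (if ∑ i, a i ≤ t then (t - ∑ i, a i) ^ n / n ! else 0) := by
  rw [volume_cornerSimplex_eq_volume_cornerSimplex_zero, volume_cornerSimplex_zero]
  simp only [sub_nonneg]

theorem volume_cornerSimplex_ne_top {n : ℕ} (a : Fin n → ℝ) (t : ℝ) :
    volume (cornerSimplex a t) ≠ ⊤ := by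
  rw [volume_cornerSimplex]
  exact ENNReal.ofReal_ne_top

theorem measureReal_cornerSimplex {n : ℕ} (a : Fin n → ℝ) (t : ℝ) :
    volume.real (cornerSimplex a t) =
      if ∑ i, a i ≤ t then (t - ∑ i, a i) ^ n / n ! else 0 := by
  rw [measureReal_def, volume_cornerSimplex]
  split_ifs with h
  · have := sub_nonneg.2 h
    rw [ENNReal.toReal_ofReal (by positivity)]
  · simp

theorem measureReal_eq_sum_of_indicator_eq {α ι : Type*} [MeasurableSpace α] {μ : Measure α}
    {T : Set α} {s : Finset ι} {A : ι → Set α} (c : ι → ℝ) (hT : MeasurableSet T)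
    (hA : ∀ i ∈ s, MeasurableSet (A i)) (hAfin : ∀ i ∈ s, μ (A i) ≠ ⊤)
    (h : ∀ y, T.indicator 1 y = ∑ i ∈ s, c i * (A i).indicator 1 y) :
    μ.real T = ∑ i ∈ s, c i * μ.real (A i) := by
  have hint : ∀ i ∈ s, Integrable (fun y => c i * (A i).indicator 1 y) μ := fun i hi =>
    ((integrable_indicator_iff (hA i hi)).2 (integrableOn_const (hAfin i hi))).const_mul _
  rw [← integral_indicator_one hT, funext h, integral_finsetSum s hint]
  refine sum_congr rfl fun i hi => ?_
  rw [integral_const_mul, integral_indicator_one (hA i hi)]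

theorem measureReal_univ_pi_Ico_inter_sum_le (n : ℕ) (x : ℝ) :
    volume.real ((Set.univ.pi fun _ => Set.Ico (0 : ℝ) 1) ∩ {y : Fin n → ℝ | ∑ i, y i ≤ x}) =
      ∑ s ∈ (univ : Finset (Fin n)).powerset,
        (-1) ^ #s * (if (#s : ℝ) ≤ x then (x - #s) ^ n / n ! else 0) := by
  have hexpand : ∀ y, ((Set.univ.pi fun _ => Set.Ico (0 : ℝ) 1) ∩
      {y : Fin n → ℝ | ∑ i, y i ≤ x}).indicator (1 : (Fin n → ℝ) → ℝ) y =
        ∑ s ∈ (univ : Finset (Fin n)).powerset,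
          (-1) ^ #s * (cornerSimplex ((s : Set (Fin n)).indicator 1) x).indicator 1 y := by
    intro y
    simp_rw [cornerSimplex, Set.inter_indicator_one, Pi.mul_apply,
      indicator_univ_pi_Ico_eq_sum_powerset, sum_mul, mul_assoc]
  rw [measureReal_eq_sum_of_indicator_eq _
    ((MeasurableSet.univ_pi fun _ => measurableSet_Ico).inter
      (measurableSet_le (by fun_prop) measurable_const))
    (fun s _ => measurableSet_cornerSimplex _ _) (fun s _ => volume_cornerSimplex_ne_top _ _)
    hexpand]
  refine sum_congr rfl fun s _ => ?_
  rw [measureReal_cornerSimplex, sum_indicator_subset _ (subset_univ s)]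
  simp

theorem sum_powerset_card_eq_sum_range_floor (n : ℕ) (x : ℝ) (hx : 0 ≤ x) :
    ∑ s ∈ (univ : Finset (Fin n)).powerset,
        (-1) ^ #s * (if (#s : ℝ) ≤ x then (x - #s) ^ n / n ! else 0) =
      1 / n ! * ∑ k ∈ range (⌊x⌋₊ + 1), (-1) ^ k * (n.choose k : ℝ) * (x - k) ^ n := by
  set G : ℕ → ℝ := fun k => (-1) ^ k * if (k : ℝ) ≤ x then (x - k) ^ n / n ! else 0
  set F : ℕ → ℝ := fun k => n.choose k * G k
  calc _ = ∑ k ∈ range (n + 1), F k := by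
        rw [sum_powerset_apply_card G, card_univ, Fintype.card_fin]
        simp only [nsmul_eq_mul, F]
    _ = ∑ k ∈ range (n + ⌊x⌋₊ + 1), F k :=
        sum_subset (range_subset_range.2 (by omega)) fun k _ hk => by
          simp [F, G, Nat.choose_eq_zero_of_lt (by simpa using hk : n < k)]
    _ = ∑ k ∈ range (⌊x⌋₊ + 1), F k := by
        refine (sum_subset (range_subset_range.2 (by omega)) fun k _ hk => ?_).symm
        have : x < k := Nat.lt_of_floor_lt (by simpa using hk)
        simp [F, G, not_le.2 this]
    _ = _ := by
        rw [mul_sum]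
        refine sum_congr rfl fun k hk => ?_
        have : (k : ℝ) ≤ x := (Nat.cast_le.2 (Nat.lt_succ_iff.1 (mem_range.1 hk))).trans
          (Nat.floor_le hx)
        simp only [F, G, if_pos this]
        ring

theorem irwin_hall_cdf_general (n : ℕ) (x : ℝ) (hx0 : 0 ≤ x) :
    volume {y : Fin n → ℝ | (∀ i, y i ∈ Set.Icc (0 : ℝ) 1) ∧ ∑ i, y i ≤ x} =
      ENNReal.ofReal ((1 / (n.factorial : ℝ)) *
        ∑ k ∈ Finset.range (⌊x⌋₊ + 1),
          (-1 : ℝ) ^ k * (n.choose k : ℝ) * (x - (k : ℝ)) ^ n) := by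
  have hcube : {y : Fin n → ℝ | (∀ i, y i ∈ Set.Icc (0 : ℝ) 1) ∧ ∑ i, y i ≤ x} =ᵐ[volume]
      ((Set.univ.pi fun _ => Set.Ico (0 : ℝ) 1) ∩ {y | ∑ i, y i ≤ x} : Set (Fin n → ℝ)) := by
    have : {y : Fin n → ℝ | (∀ i, y i ∈ Set.Icc (0 : ℝ) 1) ∧ ∑ i, y i ≤ x} =
        (Set.univ.pi fun _ => Set.Icc (0 : ℝ) 1) ∩ {y : Fin n → ℝ | ∑ i, y i ≤ x} := by
      ext y
      simp only [Set.mem_ofPred_eq, Set.mem_inter_iff, Set.mem_univ_pi]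
    rw [this, volume_pi]
    exact Measure.pi_Ico_ae_eq_pi_Icc.symm.inter (ae_eq_refl _)
  have hfin : volume ((Set.univ.pi fun _ => Set.Ico (0 : ℝ) 1) ∩ {y : Fin n → ℝ | ∑ i, y i ≤ x})
      ≠ ⊤ :=
    (measure_inter_lt_top_of_left_ne_top (by simp [Real.volume_pi_Ico])).ne
  rw [measure_congr hcube, ← ENNReal.ofReal_toReal hfin, ← measureReal_def,
    measureReal_univ_pi_Ico_inter_sum_le, sum_powerset_card_eq_sum_range_floor n x hx0]

/-- Irwin–Hall CDF: the measure of the sublevel set of the coordinate sum on the unit cube. -/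
theorem irwin_hall_cdf (n : ℕ) (hn : 1 ≤ n) (x : ℝ) (hx0 : 0 ≤ x) (hxn : x ≤ n) :
    volume {y : Fin n → ℝ | (∀ i, y i ∈ Set.Icc (0 : ℝ) 1) ∧ ∑ i, y i ≤ x} =
      ENNReal.ofReal ((1 / (n.factorial : ℝ)) *
        ∑ k ∈ Finset.range (⌊x⌋₊ + 1),
          (-1 : ℝ) ^ k * (n.choose k : ℝ) * (x - (k : ℝ)) ^ n) :=
  irwin_hall_cdf_general n x hx0
end

section
/- If σ = {λ_1, ..., λ_n} is the list of real eigenvalues (with multiplicity) of an entrywise nonnegative real n×n matrix whose characteristic polynomial splits over ℝ, then max_i |λ_i| is itself an element of σ. -/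
/-!
For a nonnegative matrix every power `A ^ k` has nonnegative trace, and `tr (A ^ k) = ∑ λ ^ k`
over the eigenvalues. If the largest modulus `ρ > 0` were attained only at `-ρ`, then along odd
`k` the normalized power sums `∑ (λ / ρ) ^ k` would tend to minus the multiplicity of `-ρ`,
which is negative.
-/

open Polynomial Matrix Filter Topology

namespace Matrix

variable {n R K : Type*} [Fintype n] [DecidableEq n]

theorem card_eq_of_charpoly_eq [CommRing R] [Nontrivial R] {A : Matrix n n R} {σ : Multiset R}
    (hσ : A.charpoly = (σ.map fun l => X - C l).prod) : Multiset.card σ = Fintype.card n := by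
  simpa [hσ, natDegree_multiset_prod_X_sub_C_eq_card] using A.charpoly_natDegree_eq_dim

theorem det_sub_scalar_eq_prod [CommRing R] [Nontrivial R] {A : Matrix n n R} {σ : Multiset R}
    (hσ : A.charpoly = (σ.map fun l => X - C l).prod) (ν : R) :
    (A - scalar n ν).det = (σ.map (· - ν)).prod := by
  have hneg : σ.map (· - ν) = (σ.map (ν - ·)).map Neg.neg := by simp [Multiset.map_map]
  rw [hneg, Multiset.prod_map_neg, Multiset.card_map, card_eq_of_charpoly_eq hσ, ← neg_sub,
    det_neg, ← eval_charpoly, hσ, eval_multiset_prod, Multiset.map_map]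
  simp

theorem det_aeval_eq_prod_eval_of_splits [CommRing R] [IsDomain R] {A : Matrix n n R}
    {σ : Multiset R} (hσ : A.charpoly = (σ.map fun l => X - C l).prod) {p : R[X]}
    (hp : p.Splits) : (aeval A p).det = (σ.map p.eval).prod := by
  -- Both sides are multiplicative in `p`, so it suffices to compare them on the factors of `p`.
  let detAeval : R[X] →* R := detMonoidHom.comp (aeval (R := R) A).toMonoidHom
  let prodEval : R[X] →* R :=
    { toFun q := (σ.map q.eval).prod
      map_one' := by simp
      map_mul' q r := by simp [Multiset.prod_map_mul] }
  have hC (c : R) : detAeval (C c) = prodEval (C c) := by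
    simp [detAeval, prodEval, card_eq_of_charpoly_eq hσ, algebraMap_eq_diagonal,
      Pi.algebraMap_def]
  have hlin (ν : R) : detAeval (X - C ν) = prodEval (X - C ν) := by
    simp [detAeval, prodEval, ← det_sub_scalar_eq_prod hσ, algebraMap_eq_diagonal,
      Pi.algebraMap_def]
  change detAeval p = prodEval p
  rw [hp.eq_prod_roots, map_mul, map_mul, map_multiset_prod, map_multiset_prod, hC,
    Multiset.map_map, Multiset.map_map]
  simp only [Function.comp_def, hlin]

theorem charpoly_aeval_eq_prod [Field K] [IsAlgClosed K] {A : Matrix n n K} {σ : Multiset K}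
    (hσ : A.charpoly = (σ.map fun l => X - C l).prod) (p : K[X]) :
    (aeval A p).charpoly = ((σ.map p.eval).map fun l => X - C l).prod := by
  refine Polynomial.funext fun μ => ?_
  have hsub : scalar n μ - aeval A p = aeval A (C μ - p) := by
    simp [algebraMap_eq_diagonal, Pi.algebraMap_def]
  rw [eval_charpoly, hsub, det_aeval_eq_prod_eval_of_splits hσ (IsAlgClosed.splits _),
    eval_multiset_prod, Multiset.map_map, Multiset.map_map]
  simp [Function.comp_def]

theorem charpoly_pow_eq_prod [Field K] {A : Matrix n n K} {σ : Multiset K}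
    (hσ : A.charpoly = (σ.map fun l => X - C l).prod) (k : ℕ) :
    (A ^ k).charpoly = ((σ.map (· ^ k)).map fun l => X - C l).prod := by
  let f := algebraMap K (AlgebraicClosure K)
  have hσ' : (A.map f).charpoly = ((σ.map f).map fun l => X - C l).prod := by
    simp [charpoly_map, hσ, Polynomial.map_multiset_prod, Multiset.map_map]
  apply Polynomial.map_injective f f.injective
  have := charpoly_aeval_eq_prod hσ' (X ^ k)
  simp only [map_pow, aeval_X, eval_pow, eval_X] at this
  rw [← charpoly_map, ← f.mapMatrix_apply, map_pow, f.mapMatrix_apply, this]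
  simp [Polynomial.map_multiset_prod, Multiset.map_map]

theorem trace_eq_sum_of_charpoly_eq_prod [CommRing R] {A : Matrix n n R} {σ : Multiset R}
    (hσ : A.charpoly = (σ.map fun l => X - C l).prod) : A.trace = σ.sum := by
  rw [trace_eq_neg_charpoly_nextCoeff, hσ, multiset_prod_X_sub_C_nextCoeff, neg_neg]

theorem trace_pow_eq_sum_pow [Field K] {A : Matrix n n K} {σ : Multiset K}
    (hσ : A.charpoly = (σ.map fun l => X - C l).prod) (k : ℕ) :
    (A ^ k).trace = (σ.map (· ^ k)).sum :=
  trace_eq_sum_of_charpoly_eq_prod (charpoly_pow_eq_prod hσ k)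

end Matrix

namespace Multiset

theorem exists_mem_forall_abs_le_of_sum_odd_pow_nonneg {σ : Multiset ℝ} (hσ : σ ≠ 0)
    (h : ∀ k : ℕ, 0 ≤ (σ.map fun m => m ^ (2 * k + 1)).sum) :
    ∃ l ∈ σ, ∀ m ∈ σ, |m| ≤ l := by
  classical
  obtain ⟨l₀, hl₀, hmax⟩ := Finset.exists_max_image σ.toFinset abs (by simpa using hσ)
  simp only [mem_toFinset] at hl₀ hmax
  set ρ := |l₀|
  by_cases hρ : ρ ∈ σ
  · exact ⟨ρ, hρ, hmax⟩
  exfalso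
  have hl₀_eq : l₀ = -ρ := by
    rcases abs_choice l₀ with h' | h'
    · exact (hρ (by rwa [show ρ = l₀ from h'])).elim
    · linarith
  have hρ_pos : 0 < ρ := abs_pos.mpr fun h0 => hρ (by simpa [ρ, h0] using hl₀)
  have hlim : ∀ m ∈ σ, Tendsto (fun k : ℕ => (m / ρ) ^ (2 * k + 1)) atTop
      (𝓝 (if m = -ρ then -1 else 0)) := by
    intro m hm
    split_ifs with hm_eq
    · simp [hm_eq, hρ_pos.ne', pow_succ, pow_mul]
    · have hm_lt : |m / ρ| < 1 := by
        rw [abs_div, abs_of_pos hρ_pos, div_lt_one hρ_pos]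
        refine (hmax m hm).lt_of_ne fun habs => ?_
        rcases abs_choice m with h' | h'
        · exact hρ (by rwa [← habs, h'])
        · exact hm_eq (by linarith)
      exact (tendsto_pow_atTop_nhds_zero_of_abs_lt_one hm_lt).comp
        (tendsto_atTop_atTop_of_monotone (fun a b hab => by omega) fun b => ⟨b, by omega⟩)
  have hsum := tendsto_multiset_sum σ hlim
  rw [sum_map_eq_nsmul_single (-ρ) fun m hm _ => if_neg hm, if_pos rfl] at hsum
  have hlim_neg : σ.count (-ρ) • (-1 : ℝ) < 0 := by
    simpa using count_pos.mpr (hl₀_eq ▸ hl₀)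
  obtain ⟨k, hk⟩ := (hsum.eventually (gt_mem_nhds hlim_neg)).exists
  refine hk.not_ge ?_
  simp only [div_pow, sum_map_div]
  exact div_nonneg (h k) (pow_pos hρ_pos _).le

end Multiset

/-- Perron–Frobenius consequence: if the characteristic polynomial of an entrywise nonnegative
matrix splits over `ℝ` with roots `σ`, then `max |λ_i|` is itself an element of `σ`. -/
theorem spectral_radius_mem_spectrum (n : ℕ) (hn : 1 ≤ n) (A : Matrix (Fin n) (Fin n) ℝ)
    (hA : ∀ i j, 0 ≤ A i j) (σ : Multiset ℝ)
    (hσ : A.charpoly = (σ.map fun l => X - C l).prod) :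
    ∃ l ∈ σ, ∀ m ∈ σ, |m| ≤ l := by
  have hσ_ne : σ ≠ 0 := by
    rintro rfl
    have hcard := card_eq_of_charpoly_eq hσ
    simp only [Multiset.card_zero, Fintype.card_fin] at hcard
    omega
  refine Multiset.exists_mem_forall_abs_le_of_sum_odd_pow_nonneg hσ_ne fun k => ?_
  rw [← trace_pow_eq_sum_pow hσ]
  exact Finset.sum_nonneg fun i _ => pow_apply_nonneg hA _ i i
end

section
/- Let k ≥ 2 and n = 2k+1. Consider the multiset σ consisting of k copies of 1 and k+1 copies of -k/(k+1). Then the sum of the elements of σ is 0, and there is no partition of σ into k nonempty sub-multisets σ_1, ..., σ_k such that each σ_i contains at least one copy of 1 (as its maximum-modulus element) and has nonnegative element sum. -/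
/-!
Every part needs a copy of `a`, and there are exactly as many copies of `a` as parts, so each
part holds exactly one. The `k + 1` copies of `b` then force, by pigeonhole, some part to hold
at least two of them, and the sum of that part is at most `a + 2 • b < 0`.
-/

open Finset

theorem Multiset.sum_eq_count_nsmul_add_count_nsmul {R : Type*} [AddCommMonoid R] [DecidableEq R]
    {a b : R} (hab : a ≠ b) {s : Multiset R} (hs : ∀ x ∈ s, x = a ∨ x = b) :
    s.sum = s.count a • a + s.count b • b := by
  rw [Finset.sum_multiset_count, ← Finset.sum_pair (f := fun x ↦ s.count x • x) hab]
  refine Finset.sum_subset (fun x hx ↦ ?_) (fun x _ hx ↦ ?_)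
  · simpa using hs x (Multiset.mem_toFinset.1 hx)
  · rw [Multiset.count_eq_zero.2 (by simpa using hx), zero_nsmul]

theorem Finset.forall_eq_one_of_sum_eq_card {ι : Type*} [Fintype ι] {f : ι → ℕ}
    (hf : ∀ i, 1 ≤ f i) (hsum : ∑ i, f i = Fintype.card ι) (i : ι) : f i = 1 :=
  (((sum_eq_sum_iff_of_le fun i _ ↦ hf i).1 (by simpa using hsum.symm)) i (mem_univ i)).symm

theorem not_exists_partition_replicate_of_add_two_nsmul_neg {ι R : Type*} [Fintype ι] [AddCommGroup R] [LinearOrder R]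
    [IsOrderedAddMonoid R] {a b : R} (ha : 0 ≤ a) (hab : a + 2 • b < 0) :
    ¬ ∃ P : ι → Multiset R,
      ∑ i, P i = Multiset.replicate (Fintype.card ι) a + Multiset.replicate (Fintype.card ι + 1) b ∧
      ∀ i, a ∈ P i ∧ 0 ≤ (P i).sum := by
  classical
  rintro ⟨P, hP, hPa⟩
  have hb : b < 0 := (Left.nsmul_neg_iff two_pos).1 ((le_add_of_nonneg_left ha).trans_lt hab)
  have hba : b ≠ a := (hb.trans_le ha).ne
  have hcount_a : ∑ i, (P i).count a = Fintype.card ι := by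
    rw [← Multiset.count_sum', hP, Multiset.count_add, Multiset.count_replicate_self,
      Multiset.count_replicate, if_neg hba, add_zero]
  have hcount_b : ∑ i, (P i).count b = Fintype.card ι + 1 := by
    rw [← Multiset.count_sum', hP, Multiset.count_add, Multiset.count_replicate_self,
      Multiset.count_replicate, if_neg hba.symm, zero_add]
  have hone : ∀ i, (P i).count a = 1 :=
    forall_eq_one_of_sum_eq_card (fun i ↦ Multiset.one_le_count_iff_mem.2 (hPa i).1) hcount_a
  obtain ⟨j, -, hj⟩ : ∃ j ∈ univ, 1 < (P j).count b :=
    exists_lt_of_sum_lt (by simp [hcount_b])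
  have hmem : ∀ x ∈ P j, x = a ∨ x = b := by
    intro x hx
    have hxσ : x ∈ ∑ i, P i := Multiset.mem_of_le (single_le_sum (fun i _ ↦ bot_le) (mem_univ j)) hx
    rw [hP, Multiset.mem_add, Multiset.mem_replicate, Multiset.mem_replicate] at hxσ
    tauto
  have hneg : (P j).sum < 0 := calc
    (P j).sum = a + (P j).count b • b := by
      rw [Multiset.sum_eq_count_nsmul_add_count_nsmul hba.symm hmem, hone, one_nsmul]
    _ ≤ a + 2 • b := add_le_add_right (nsmul_le_nsmul_left_of_nonpos hb.le hj) a
    _ < 0 := hab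
  exact (hPa j).2.not_gt hneg

/-- The odd-order trace-zero spectrum `σ_{2k+1}` (k copies of `1`, `k+1` copies of
`-k/(k+1)`) has zero sum and admits no partition into `k` nonempty parts each containing
a copy of `1` and having nonnegative sum. -/
theorem odd_order_not_partitionable (k : ℕ) (hk : 2 ≤ k) :
    (Multiset.replicate k (1 : ℝ) +
        Multiset.replicate (k + 1) (-(k : ℝ) / ((k : ℝ) + 1))).sum = 0 ∧
    ¬ ∃ P : Fin k → Multiset ℝ,
        (∑ i, P i) = Multiset.replicate k (1 : ℝ) +
          Multiset.replicate (k + 1) (-(k : ℝ) / ((k : ℝ) + 1)) ∧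
        ∀ i, P i ≠ 0 ∧ (1 : ℝ) ∈ P i ∧ 0 ≤ (P i).sum := by
  refine ⟨?_, fun ⟨P, hP, hPi⟩ ↦ ?_⟩
  · simp only [Multiset.sum_add, Multiset.sum_replicate, nsmul_eq_mul]
    field_simp
    push_cast
    ring
  · have hneg : 1 + 2 • (-(k : ℝ) / ((k : ℝ) + 1)) < 0 := by
      have hk2 : (2 : ℝ) ≤ k := by exact_mod_cast hk
      have hk1 : (k : ℝ) + 1 ≠ 0 := by positivity
      rw [two_nsmul, ← add_div, add_div' _ _ _ hk1]
      exact div_neg_of_neg_of_pos (by linarith) (by positivity)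
    exact not_exists_partition_replicate_of_add_two_nsmul_neg zero_le_one hneg
      ⟨P, by simpa using hP, fun i ↦ (hPi i).2⟩
end

section
/- Let k ≥ 2 and n = 2(k+1). Consider the multiset σ consisting of k copies of 1, one copy of -1/(2k+1), and k+1 copies of (1-2k)/(2k+1). Then the sum of the elements of σ is 0, and there is no partition of σ into k nonempty sub-multisets each containing at least one copy of 1 and each having nonnegative element sum. -/
lemma multiset_sum_nonpos {t : Multiset ℝ} (h : ∀ x ∈ t, x ≤ 0) : t.sum ≤ 0 := by
  induction t using Multiset.induction with
  | empty => simp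
  | cons a s ih =>
    simp only [Multiset.sum_cons]
    have := h a (Multiset.mem_cons_self a s)
    have := ih (fun x hx => h x (Multiset.mem_cons_of_mem hx))
    linarith

/-- The even-order trace-zero spectrum `σ_{2(k+1)}` (k copies of `1`, one copy of
`-1/(2k+1)`, and `k+1` copies of `(1-2k)/(2k+1)`) has zero sum and admits no partition into
`k` nonempty parts each containing a copy of `1` and having nonnegative sum. -/
theorem even_order_not_partitionable (k : ℕ) (hk : 2 ≤ k) :
    (Multiset.replicate k (1 : ℝ) + {-1 / (2 * (k : ℝ) + 1)} +
        Multiset.replicate (k + 1) ((1 - 2 * (k : ℝ)) / (2 * (k : ℝ) + 1))).sum = 0 ∧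
    ¬ ∃ P : Fin k → Multiset ℝ,
        (∑ i, P i) = Multiset.replicate k (1 : ℝ) + {-1 / (2 * (k : ℝ) + 1)} +
          Multiset.replicate (k + 1) ((1 - 2 * (k : ℝ)) / (2 * (k : ℝ) + 1)) ∧
        ∀ i, P i ≠ 0 ∧ (1 : ℝ) ∈ P i ∧ 0 ≤ (P i).sum := by
  have hk2 : (2 : ℝ) ≤ (k : ℝ) := by exact_mod_cast hk
  have hq : (0:ℝ) < 2 * (k:ℝ) + 1 := by linarith
  set c : ℝ := -1 / (2 * (k : ℝ) + 1) with hc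
  set a : ℝ := (1 - 2 * (k : ℝ)) / (2 * (k : ℝ) + 1) with ha
  set σ : Multiset ℝ := Multiset.replicate k (1 : ℝ) + {c} + Multiset.replicate (k + 1) a
    with hσ
  have ha0 : a < 0 := div_neg_of_neg_of_pos (by linarith) hq
  have hc0 : c < 0 := div_neg_of_neg_of_pos (by linarith) hq
  have ha1 : a ≠ 1 := by linarith
  have hc1 : c ≠ 1 := by linarith
  have hac : a ≠ c := by
    rw [ha, hc]
    intro h
    rw [div_eq_div_iff hq.ne' hq.ne'] at h
    nlinarith
  have hcount1 : σ.count 1 = k := by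
    simp [hσ, Multiset.count_replicate, Multiset.count_singleton, hc1.symm, ha1.symm,
      Ne.symm ha1, Ne.symm hc1]
    exact fun h => absurd h ha1
  have hcounta : σ.count a = k + 1 := by
    simp [hσ, Multiset.count_replicate, Multiset.count_singleton, ha1, hac]
    exact fun h => absurd h.symm ha1
  have hmemσ : ∀ x ∈ σ, x = 1 ∨ x = c ∨ x = a := by
    intro x hx
    simp only [hσ, Multiset.mem_add, Multiset.mem_replicate, Multiset.mem_singleton] at hx
    tauto
  constructor
  · simp only [hσ, Multiset.sum_add, Multiset.sum_replicate, Multiset.sum_singleton, smul_eq_mul,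
      nsmul_eq_mul, mul_one]
    rw [ha, hc]
    push_cast
    field_simp
    ring
  · rintro ⟨P, hP, hprop⟩
    have hle : ∀ i, P i ≤ σ := by
      intro i
      rw [← hP]
      exact Finset.single_le_sum (f := P) (fun j _ => Multiset.zero_le (P j))
        (Finset.mem_univ i)
    -- each part has exactly one copy of 1
    have hsum1 : ∑ i, (P i).count 1 = k := by
      rw [← Multiset.count_sum', hP]; exact hcount1
    have hone : ∀ i, (P i).count 1 = 1 := by
      have h1 : ∀ i ∈ Finset.univ, 1 ≤ (P i).count (1:ℝ) := fun i _ =>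
        Multiset.one_le_count_iff_mem.2 (hprop i).2.1
      have heq : ∑ i : Fin k, (P i).count 1 = ∑ _i : Fin k, 1 := by
        simp [hsum1]
      intro i
      exact ((Finset.sum_eq_sum_iff_of_le h1).1 heq.symm i (Finset.mem_univ i)).symm
    -- some part has at least two copies of a
    have hsuma : ∑ i, (P i).count a = k + 1 := by
      rw [← Multiset.count_sum', hP]; exact hcounta
    have htwo : ∃ i, 2 ≤ (P i).count a := by
      by_contra h
      push_neg at h
      have : ∑ i, (P i).count a ≤ ∑ _i : Fin k, 1 :=
        Finset.sum_le_sum (fun i _ => Nat.lt_succ_iff.mp (h i))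
      simp [hsuma] at this
    obtain ⟨i, hi⟩ := htwo
    -- decompose P i
    have hsub : ({1} + Multiset.replicate 2 a : Multiset ℝ) ≤ P i := by
      rw [Multiset.le_iff_count]
      intro x
      by_cases hx1 : x = 1
      · subst hx1
        simp [Multiset.count_replicate, Ne.symm ha1, hone i]
      · by_cases hxa : x = a
        · subst hxa
          simp [Multiset.count_replicate, ha1, hi]
        · simp [Multiset.count_singleton, Multiset.count_replicate, hx1, hxa]
    obtain ⟨t, ht⟩ := Multiset.le_iff_exists_add.mp hsub
    have htnonpos : ∀ x ∈ t, x ≤ 0 := by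
      intro x hx
      have hxP : x ∈ P i := ht ▸ Multiset.mem_add.2 (Or.inr hx)
      have hxσ := hmemσ x (Multiset.mem_of_le (hle i) hxP)
      rcases hxσ with h1 | hc' | ha'
      · exfalso
        subst h1
        have : (P i).count 1 = 1 + t.count 1 := by
          rw [ht, Multiset.count_add, Multiset.count_add]
          simp [Multiset.count_replicate, Ne.symm ha1]
        have htc : t.count (1:ℝ) = 0 := by
          have := hone i
          omega
        exact (Multiset.count_eq_zero.mp htc) hx
      · rw [hc']; linarith
      · rw [ha']; linarith
    have hsumi : (P i).sum = 1 + 2 * a + t.sum := by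
      rw [ht]
      simp [Multiset.sum_replicate]
      ring
    have h2a : 1 + 2 * a < 0 := by
      have haq : a * (2 * (k:ℝ) + 1) = 1 - 2 * (k:ℝ) := by
        rw [ha]; field_simp
      nlinarith
    have := (hprop i).2.2
    have := multiset_sum_nonpos htnonpos
    rw [hsumi] at *
    linarith
end

section
/- The multiset {1, 1, -2/3, -2/3, -2/3} has element sum 0, and there is no partition of it into two nonempty sub-multisets σ_1, σ_2 such that each σ_i has nonnegative element sum and contains its own maximum-modulus element as an element (i.e., each part contains a copy of 1). -/
open Multiset

lemma friedland_aux (s : Multiset ℝ) (h : ∀ x ∈ s, x = (1:ℝ) ∨ x = -2/3) :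
    s.sum = (s.count 1 : ℝ) - (2/3) * (s.count (-2/3)) := by
  classical
  induction s using Multiset.induction with
  | empty => simp
  | cons a t ih =>
    have ha := h a (Multiset.mem_cons_self _ _)
    have ht : ∀ x ∈ t, x = (1:ℝ) ∨ x = -2/3 := fun x hx => h x (Multiset.mem_cons_of_mem hx)
    rcases ha with rfl | rfl <;>
      · rw [Multiset.sum_cons, ih ht, Multiset.count_cons, Multiset.count_cons]
        push_cast
        norm_num
        ring

/-- Friedland's example: `{1, 1, -2/3, -2/3, -2/3}` has zero sum and cannot be partitioned
into two nonempty parts each having nonnegative sum and containing its own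
maximum-modulus element. -/
theorem friedland_example :
    (({1, 1, -2/3, -2/3, -2/3} : Multiset ℝ)).sum = 0 ∧
    ¬ ∃ s₁ s₂ : Multiset ℝ,
        s₁ + s₂ = ({1, 1, -2/3, -2/3, -2/3} : Multiset ℝ) ∧ s₁ ≠ 0 ∧ s₂ ≠ 0 ∧
        0 ≤ s₁.sum ∧ 0 ≤ s₂.sum ∧
        (∃ l ∈ s₁, ∀ m ∈ s₁, |m| ≤ l) ∧ (∃ l ∈ s₂, ∀ m ∈ s₂, |m| ≤ l) := by
  classical
  set S : Multiset ℝ := {1, 1, -2/3, -2/3, -2/3} with hS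
  have hsumS : S.sum = 0 := by
    simp [hS]; norm_num
  have hmemS : ∀ x ∈ S, x = (1:ℝ) ∨ x = -2/3 := by
    intro x hx
    simp [hS] at hx
    tauto
  have hcount1 : S.count 1 = 2 := by
    simp [hS, Multiset.count_cons]; norm_num
  refine ⟨hsumS, ?_⟩
  rintro ⟨s₁, s₂, hsum, h1, h2, hn1, hn2, ⟨l₁, hl₁, hm₁⟩, ⟨l₂, hl₂, hm₂⟩⟩
  have hadd : s₁.sum + s₂.sum = 0 := by
    rw [← Multiset.sum_add, hsum, hsumS]
  have hz1 : s₁.sum = 0 := by linarith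
  have hz2 : s₂.sum = 0 := by linarith
  have hmem1 : ∀ x ∈ s₁, x = (1:ℝ) ∨ x = -2/3 := fun x hx =>
    hmemS x (by rw [← hsum]; exact Multiset.mem_add.2 (Or.inl hx))
  have hmem2 : ∀ x ∈ s₂, x = (1:ℝ) ∨ x = -2/3 := fun x hx =>
    hmemS x (by rw [← hsum]; exact Multiset.mem_add.2 (Or.inr hx))
  have hl1pos : (0:ℝ) ≤ l₁ := le_trans (abs_nonneg l₁) (hm₁ l₁ hl₁)
  have hl2pos : (0:ℝ) ≤ l₂ := le_trans (abs_nonneg l₂) (hm₂ l₂ hl₂)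
  have hl1 : l₁ = 1 := by
    rcases hmem1 l₁ hl₁ with h | h
    · exact h
    · linarith
  have hl2 : l₂ = 1 := by
    rcases hmem2 l₂ hl₂ with h | h
    · exact h
    · linarith
  have h11 : (1:ℝ) ∈ s₁ := hl1 ▸ hl₁
  have h12 : (1:ℝ) ∈ s₂ := hl2 ▸ hl₂
  have hc1 : 1 ≤ s₁.count 1 := Multiset.one_le_count_iff_mem.2 h11
  have hc2 : 1 ≤ s₂.count 1 := Multiset.one_le_count_iff_mem.2 h12
  have hctot : s₁.count 1 + s₂.count 1 = 2 := by
    rw [← Multiset.count_add, hsum, hcount1]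
  have ha1 : s₁.count 1 = 1 := by omega
  have hsum1 := friedland_aux s₁ hmem1
  rw [hz1, ha1] at hsum1
  have : (2:ℝ) * (s₁.count (-2/3)) = 3 := by push_cast at hsum1 ⊢; linarith
  have h3 : 2 * (s₁.count (-2/3)) = 3 := by exact_mod_cast this
  omega
end

section
/- Every finite multiset σ = {1, λ_2, ..., λ_n} of reals with 1 ≥ λ_2 ≥ ... ≥ λ_n, λ_i ≤ 0 for i ≥ 2, and 1 + λ_2 + ... + λ_n ≥ 0 is the spectrum of some entrywise nonnegative n×n real matrix (namely the companion matrix of ∏(x - λ_i)). -/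
open Polynomial

namespace SuleimanovaAux

open Matrix Finset

/-- The companion matrix of `X^(n+1) + ∑ i, c i • X^i`. -/
def comp (n : ℕ) (c : Fin (n + 1) → ℝ) : Matrix (Fin (n + 1)) (Fin (n + 1)) ℝ :=
  fun i j => (if j = Fin.last n then -(c i) else 0) + (if (i : ℕ) = (j : ℕ) + 1 then 1 else 0)

lemma comp_charmatrix_det : ∀ (n : ℕ) (c : Fin (n + 1) → ℝ),
    (charmatrix (comp n c)).det = X ^ (n + 1) + ∑ i : Fin (n + 1), C (c i) * X ^ (i : ℕ) := by
  intro n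
  induction n with
  | zero =>
    intro c
    rw [Matrix.det_fin_one]
    simp [charmatrix_apply_eq, comp]
  | succ n ih =>
    intro c
    set M := charmatrix (comp (n + 1) c) with hM
    have h00 : M 0 0 = X := by
      rw [hM, charmatrix_apply_eq]
      have h1 : (0 : Fin (n + 2)) ≠ Fin.last (n + 1) := by
        simp [Fin.ext_iff]
      simp [comp, h1]
    have hlast : M 0 (Fin.last (n + 1)) = C (c 0) := by
      have hne : (0 : Fin (n + 2)) ≠ Fin.last (n + 1) := by
        simp [Fin.ext_iff]
      rw [hM, charmatrix_apply_ne _ _ _ hne]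
      simp [comp]
    have hmid : ∀ j : Fin (n + 2), j ≠ 0 → j ≠ Fin.last (n + 1) → M 0 j = 0 := by
      intro j hj0 hjl
      rw [hM, charmatrix_apply_ne _ _ _ (Ne.symm hj0)]
      simp [comp, hjl]
    have hminor0 : M.submatrix Fin.succ ((0 : Fin (n + 2)).succAbove)
        = charmatrix (comp n (fun i => c i.succ)) := by
      ext i j
      have hsucc : j.succ = Fin.last (n + 1) ↔ j = Fin.last n := by
        simp [Fin.ext_iff]
      rw [hM]
      simp only [Matrix.submatrix_apply, Fin.succAbove_zero, charmatrix_apply,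
        Matrix.diagonal_apply, comp, Function.comp_apply]
      have hij : (i.succ = j.succ) ↔ (i = j) := Fin.succ_inj
      have hval : ((i.succ : ℕ) = (j.succ : ℕ) + 1) ↔ ((i : ℕ) = (j : ℕ) + 1) := by
        simp [Fin.val_succ]
      rw [if_congr hij rfl rfl, if_congr hsucc rfl rfl, if_congr hval rfl rfl]
    have hminorlast : (M.submatrix Fin.succ ((Fin.last (n + 1)).succAbove)).det
        = (-1 : Polynomial ℝ) ^ (n + 1) := by
      have htri : (M.submatrix Fin.succ ((Fin.last (n + 1)).succAbove)).BlockTriangular id := by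
        intro i j hij
        have hlt : (j : ℕ) < (i : ℕ) := hij
        have hne : i.succ ≠ j.castSucc := by
          simp [Fin.ext_iff]; omega
        rw [hM]
        simp only [Matrix.submatrix_apply, Fin.succAbove_last]
        rw [charmatrix_apply_ne _ _ _ hne]
        have h1 : j.castSucc ≠ Fin.last (n + 1) := (Fin.castSucc_lt_last j).ne
        have h2 : ¬ ((i.succ : ℕ) = (j.castSucc : ℕ) + 1) := by
          simp [Fin.val_succ]; omega
        have h3 : ¬ ((i : ℕ) = (j : ℕ)) := by omega
        simp [comp, h1, h3]
      rw [Matrix.det_of_upperTriangular htri]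
      have hdiag : ∀ i : Fin (n + 1),
          (M.submatrix Fin.succ ((Fin.last (n + 1)).succAbove)) i i = -1 := by
        intro i
        have hne : i.succ ≠ i.castSucc := by
          simp [Fin.ext_iff]
        rw [hM]
        simp only [Matrix.submatrix_apply, Fin.succAbove_last]
        rw [charmatrix_apply_ne _ _ _ hne]
        have h1 : i.castSucc ≠ Fin.last (n + 1) := (Fin.castSucc_lt_last i).ne
        have h2 : ((i.succ : ℕ) = (i.castSucc : ℕ) + 1) := by simp
        simp [comp, h1, h2]
      rw [Finset.prod_congr rfl fun i _ => hdiag i]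
      simp
    have hexp := Matrix.det_succ_row_zero M
    set f : Fin (n + 2) → Polynomial ℝ :=
      fun j => (-1) ^ (j : ℕ) * M 0 j * (M.submatrix Fin.succ j.succAbove).det with hf
    have hlast0 : Fin.last (n + 1) ∈ (Finset.univ : Finset (Fin (n + 2))).erase 0 := by
      simp [Fin.ext_iff]
    have hsum1 : ∑ j : Fin (n + 2), f j = f 0 + ∑ j ∈ Finset.univ.erase 0, f j := by
      rw [Finset.add_sum_erase _ f (Finset.mem_univ 0)]
    have hsum2 : ∑ j ∈ Finset.univ.erase 0, f j = f (Fin.last (n + 1)) := by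
      refine Finset.sum_eq_single_of_mem _ hlast0 ?_
      intro b hbmem hb
      obtain ⟨hb0, -⟩ := Finset.mem_erase.mp hbmem
      simp only [hf]
      rw [hmid b hb0 hb]
      ring
    have hf0 : f 0 = X * (X ^ (n + 1) + ∑ i : Fin (n + 1), C (c i.succ) * X ^ (i : ℕ)) := by
      simp only [hf, Fin.val_zero, pow_zero, one_mul, h00, hminor0, ih]
    have hflast : f (Fin.last (n + 1)) = C (c 0) := by
      simp only [hf, Fin.val_last, hlast, hminorlast]
      rw [mul_comm, ← mul_assoc, ← pow_add,
        show (n + 1) + (n + 1) = 2 * (n + 1) by ring, pow_mul]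
      norm_num
    have hterm : ∀ i : Fin (n + 1),
        X * (C (c i.succ) * X ^ (i : ℕ)) = C (c i.succ) * X ^ ((i.succ : ℕ)) := by
      intro i
      rw [Fin.val_succ, pow_succ]
      ring
    have hRHS : X ^ (n + 1 + 1) + ∑ i : Fin (n + 1 + 1), C (c i) * X ^ (i : ℕ)
        = X * (X ^ (n + 1) + ∑ i : Fin (n + 1), C (c i.succ) * X ^ (i : ℕ)) + C (c 0) := by
      rw [Fin.sum_univ_succ, mul_add, Finset.mul_sum]
      rw [Finset.sum_congr rfl fun i _ => hterm i]
      simp only [Fin.val_zero, pow_zero, mul_one]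
      ring
    rw [hexp, hsum1, hsum2, hf0, hflast]
    exact hRHS.symm

lemma coeff_prod_aux {ι : Type*} [DecidableEq ι] (s : Finset ι) (l : ι → ℝ)
    (hl : ∀ i ∈ s, l i ≤ 0) :
    (∀ k, 0 ≤ (∏ i ∈ s, (X - C (l i))).coeff k) ∧
      (∀ k < s.card, (∏ i ∈ s, (X - C (l i))).coeff k ≤
        (∑ i ∈ s, -l i) * (∏ i ∈ s, (X - C (l i))).coeff (k + 1)) := by
  induction s using Finset.cons_induction with
  | empty =>
    constructor
    · intro k
      simp [Polynomial.coeff_one]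
      split <;> norm_num
    · intro k hk
      simp at hk
  | cons a s ha ih =>
    obtain ⟨hq0, hq1⟩ := ih (fun i hi => hl i (Finset.mem_cons_of_mem hi))
    have ha' : 0 ≤ -l a := by
      have := hl a (Finset.mem_cons_self a s)
      linarith
    have ht0 : 0 ≤ ∑ i ∈ s, -l i := Finset.sum_nonneg fun i hi => by
      have := hl i (Finset.mem_cons_of_mem hi)
      linarith
    set q := ∏ i ∈ s, (X - C (l i)) with hq
    set t := ∑ i ∈ s, -l i with ht
    have hprod : ∏ i ∈ Finset.cons a s ha, (X - C (l i)) = (X - C (l a)) * q := by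
      rw [Finset.prod_cons]
    have hcoeff0 : ((X - C (l a)) * q).coeff 0 = -(l a * q.coeff 0) := by
      rw [sub_mul, Polynomial.coeff_sub, Polynomial.mul_coeff_zero,
        Polynomial.coeff_X_zero, Polynomial.coeff_C_mul]
      ring
    have hcoeffS : ∀ k : ℕ, ((X - C (l a)) * q).coeff (k + 1)
        = q.coeff k - l a * q.coeff (k + 1) := by
      intro k
      rw [sub_mul, Polynomial.coeff_sub, Polynomial.coeff_X_mul, Polynomial.coeff_C_mul]
    constructor
    · intro k
      rw [hprod]
      cases k with
      | zero =>
        rw [hcoeff0]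
        nlinarith [hq0 0]
      | succ j =>
        rw [hcoeffS]
        nlinarith [hq0 j, hq0 (j + 1)]
    · intro k hk
      rw [Finset.card_cons] at hk
      rw [hprod, Finset.sum_cons]
      cases k with
      | zero =>
        rw [hcoeff0, hcoeffS]
        nlinarith [hq0 0, hq0 1, mul_nonneg ha' (hq0 1), mul_nonneg ht0 (hq0 0),
          mul_nonneg (mul_nonneg ht0 ha') (hq0 1), mul_nonneg (mul_nonneg ha' ha') (hq0 1)]
      | succ j =>
        have hj : j < s.card := by omega
        rw [hcoeffS, hcoeffS]
        nlinarith [hq1 j hj, hq0 (j + 1), hq0 (j + 2),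
          mul_nonneg (mul_nonneg ha' ha') (hq0 (j + 2)),
          mul_nonneg (mul_nonneg ht0 ha') (hq0 (j + 2)),
          mul_nonneg ha' (hq0 (j + 1))]

end SuleimanovaAux

open SuleimanovaAux Matrix

/-- Every Suleĭmanova spectrum `{1, λ_2, ..., λ_n}` with `1 ≥ λ_2 ≥ ... ≥ λ_n`,
`λ_i ≤ 0` for `i ≥ 2`, and nonnegative sum, is the spectrum of an entrywise
nonnegative matrix. -/
theorem suleimanova_realizable (n : ℕ) (hn : 1 ≤ n) (l : Fin n → ℝ)
    (h0 : l ⟨0, hn⟩ = 1)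
    (hneg : ∀ i : Fin n, i ≠ ⟨0, hn⟩ → l i ≤ 0)
    (hmono : ∀ i j : Fin n, i ≤ j → l j ≤ l i)
    (hsum : 0 ≤ ∑ i, l i) :
    ∃ A : Matrix (Fin n) (Fin n) ℝ, (∀ i j, 0 ≤ A i j) ∧
      A.charpoly = ∏ i, (X - C (l i)) := by
  cases n with
  | zero => omega
  | succ m =>
    classical
    set z : Fin (m + 1) := ⟨0, hn⟩ with hz
    set p : Polynomial ℝ := ∏ i, (X - C (l i)) with hp
    set q : Polynomial ℝ := ∏ i ∈ Finset.univ.erase z, (X - C (l i)) with hqdef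
    have hsplit : p = (X - C (l z)) * q :=
      (Finset.mul_prod_erase _ _ (Finset.mem_univ z)).symm
    have hln : ∀ i ∈ Finset.univ.erase z, l i ≤ 0 := fun i hi =>
      hneg i (Finset.ne_of_mem_erase hi)
    obtain ⟨hq0, hq1⟩ := coeff_prod_aux (Finset.univ.erase z) l hln
    set t := ∑ i ∈ Finset.univ.erase z, -l i with htdef
    have hcard : (Finset.univ.erase z).card = m := by
      rw [Finset.card_erase_of_mem (Finset.mem_univ z)]
      simp
    rw [hcard] at hq1
    have ht0 : 0 ≤ t := Finset.sum_nonneg fun i hi => by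
      have := hln i hi; linarith
    have htz : t ≤ l z := by
      have h1 : l z + ∑ i ∈ Finset.univ.erase z, l i = ∑ i, l i :=
        Finset.add_sum_erase _ l (Finset.mem_univ z)
      have h2 : t = -∑ i ∈ Finset.univ.erase z, l i := by
        rw [htdef, Finset.sum_neg_distrib]
      linarith
    have hmonic : p.Monic := monic_prod_of_monic _ _ fun i _ => monic_X_sub_C (l i)
    have hdeg : p.natDegree = m + 1 := by
      rw [hp, Polynomial.natDegree_prod_of_monic _ _ fun i _ => monic_X_sub_C (l i)]
      simp
    have hcoeff : ∀ k, k < m + 1 → p.coeff k ≤ 0 := by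
      intro k hk
      rw [hsplit]
      cases k with
      | zero =>
        rw [sub_mul, Polynomial.coeff_sub, Polynomial.mul_coeff_zero,
          Polynomial.coeff_X_zero, Polynomial.coeff_C_mul]
        nlinarith [hq0 0]
      | succ j =>
        rw [sub_mul, Polynomial.coeff_sub, Polynomial.coeff_X_mul, Polynomial.coeff_C_mul]
        have hj : j < m := by omega
        have h1 := hq1 j hj
        have h2 : 0 ≤ (l z - t) * q.coeff (j + 1) :=
          mul_nonneg (by linarith) (hq0 (j + 1))
        nlinarith
    refine ⟨SuleimanovaAux.comp m (fun i => p.coeff i), ?_, ?_⟩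
    · intro i j
      have hci : p.coeff (i : ℕ) ≤ 0 := hcoeff i i.isLt
      unfold SuleimanovaAux.comp
      split <;> split <;> simp <;> linarith
    · rw [show Matrix.charpoly (SuleimanovaAux.comp m fun i => p.coeff i)
          = (charmatrix (SuleimanovaAux.comp m fun i => p.coeff i)).det from rfl]
      rw [comp_charmatrix_det]
      conv_rhs => rw [hmonic.as_sum, hdeg]
      rw [← Fin.sum_univ_eq_sum_range (fun i => C (p.coeff i) * X ^ i) (m + 1)]
end
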